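/- arXiv:1910.11166 — 4 statements merged into one kernel-verified Lean document; each statement's English description precedes it below -/
import Mathlib

section
/- Let X, 𝒜, σ, σ̃ be as in the context. Then the commutant 𝒜′ of 𝒜 in the crossed product 𝒜⋊_σ̃ℤ equals {Σ_{n∈ℤ} fₙδⁿ : for every n ∈ ℤ, fₙ vanishes identically on Sepⁿ_𝒜(X)}. Moreover 𝒜′ is commutative and is the unique maximal commutative subalgebra of 𝒜⋊_σ̃ℤ containing 𝒜; that is, every commutative subalgebra of 𝒜⋊_σ̃ℤ containing 𝒜 is contained in 𝒜′. -/
open scoped Classical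

noncomputable section

namespace PaperTRS

/-- The algebra of complex valued functions constant on each set of the family `P`. -/
def partAlg {X J : Type*} (P : J → Set X) : Subalgebra ℂ (X → ℂ) where
  carrier := {h | ∀ i, ∀ x ∈ P i, ∀ y ∈ P i, h x = h y}
  mul_mem' := by
    intro a b ha hb i x hx y hy
    simp only [Pi.mul_apply, ha i x hx y hy, hb i x hx y hy]
  add_mem' := by
    intro a b ha hb i x hx y hy
    simp only [Pi.add_apply, ha i x hx y hy, hb i x hx y hy]
  algebraMap_mem' := by intro r i x hx y hy; rfl

/-- Piecewise constant functions on `ℝ` whose jumps all lie in the set `T`. -/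
def pcAlgOn (T : Set ℝ) : Subalgebra ℂ (ℝ → ℂ) where
  carrier := {h | ∀ x y : ℝ, x ∉ T → y ∉ T →
    (∀ u ∈ T, u ∉ Set.Icc (min x y) (max x y)) → h x = h y}
  mul_mem' := by
    intro a b ha hb x y hx hy hxy
    simp only [Pi.mul_apply, ha x y hx hy hxy, hb x y hx hy hxy]
  add_mem' := by
    intro a b ha hb x y hx hy hxy
    simp only [Pi.add_apply, ha x y hx hy hxy, hb x y hx hy hxy]
  algebraMap_mem' := by intro r x y _ _ _; rfl

/-- Invariance of an algebra of functions under a self-map of `X`. -/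
def AlgInvariant {X : Type*} (A : Subalgebra ℂ (X → ℂ)) (σ : X → X) : Prop :=
  ∀ h ∈ A, (h ∘ σ) ∈ A

/-- `Sep A σ n = {x | ∃ h ∈ A, h x ≠ σ̃ⁿ(h) x}`, where `σ̃ⁿ(h) = h ∘ σ⁻ⁿ`. -/
def Sep {X : Type*} (A : Subalgebra ℂ (X → ℂ)) (σ : Equiv.Perm X) (n : ℤ) : Set X :=
  {x | ∃ h ∈ A, h x ≠ h ((σ ^ n)⁻¹ x)}

/-- Twisted convolution product on the crossed product `⋊ ℤ`:
`(fₙ δⁿ) * (gₘ δᵐ) = fₙ · σ̃ⁿ(gₘ) · δ^{n+m}` extended bilinearly. -/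
def cmul {X : Type*} (σ : Equiv.Perm X) (f g : ℤ →₀ (X → ℂ)) : ℤ →₀ (X → ℂ) :=
  f.sum fun n a => g.sum fun m b =>
    Finsupp.single (n + m) (fun x => a x * b ((σ ^ n)⁻¹ x))

/-- Membership of an element `Σ fₙ δⁿ` in the crossed product of the algebra `B` with `ℤ`. -/
def InCrossed {X : Type*} (B : Subalgebra ℂ (X → ℂ)) (f : ℤ →₀ (X → ℂ)) : Prop :=
  ∀ n, f n ∈ B

/-- The commutant of `A` inside the crossed product `B ⋊ ℤ` (where `A ⊆ B`). -/
def commutant {X : Type*} (A B : Subalgebra ℂ (X → ℂ)) (σ : Equiv.Perm X) :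
    Set (ℤ →₀ (X → ℂ)) :=
  {f | InCrossed B f ∧
    ∀ a ∈ A, cmul σ f (Finsupp.single 0 a) = cmul σ (Finsupp.single 0 a) f}

/-- The jump points `t₁ < ⋯ < t_N` extended by `t₀ = -∞` and `t_{N+1} = +∞`. -/
def tE (N : ℕ) (t : Fin N → ℝ) (i : ℕ) : EReal :=
  if h : 1 ≤ i ∧ i ≤ N then ((t ⟨i - 1, by omega⟩ : ℝ) : EReal)
  else if i = 0 then ⊥ else ⊤

/-- The open interval `I_i = (t_i, t_{i+1})` for `0 ≤ i ≤ N`. -/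
def openPiece (N : ℕ) (t : Fin N → ℝ) (i : ℕ) : Set ℝ :=
  {x : ℝ | tE N t i < (x : EReal) ∧ (x : EReal) < tE N t (i + 1)}

/-- The sets of the partition of `ℝ` determined by the jump points: the open
intervals `I_0, …, I_N` together with the singletons `{t_i}`. -/
def pieces (N : ℕ) (t : Fin N → ℝ) : Set (Set ℝ) :=
  {P | (∃ i : ℕ, i ≤ N ∧ P = openPiece N t i) ∨ (∃ i : Fin N, P = {t i})}

/-- `C_k`: points `x` such that `k` is the smallest positive integer with `x` and
`σᵏ(x)` in one common set of the partition. -/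
def Ck (N : ℕ) (t : Fin N → ℝ) (σ : Equiv.Perm ℝ) (k : ℕ) : Set ℝ :=
  {x | IsLeast {j : ℕ | 0 < j ∧ ∃ P ∈ pieces N t, x ∈ P ∧ (σ ^ j) x ∈ P} k}

end PaperTRS
namespace PaperTRS

/-- With `p` points `s i 0 < ⋯ < s i (p-1)` added in the interval `I_{α i}`, the `j`-th
open subinterval of the refined partition of `I_{α i}`, for `j = 0, …, p`. -/
def subPiece (N : ℕ) (t : Fin N → ℝ) {k p : ℕ} (α : Fin k → ℕ)
    (s : Fin k → Fin p → ℝ) (i : Fin k) (j : Fin (p + 1)) : Set ℝ :=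
  {x : ℝ |
    (if hj : (j : ℕ) = 0 then tE N t (α i)
      else ((s i ⟨(j : ℕ) - 1, by have := j.isLt; omega⟩ : ℝ) : EReal)) < (x : EReal) ∧
    (x : EReal) <
      (if hj : (j : ℕ) = p then tE N t (α i + 1)
        else ((s i ⟨(j : ℕ), by have := j.isLt; omega⟩ : ℝ) : EReal))}

/-- The sets of the refined partition of the union of the intervals `I_{α i}`: the open
subintervals determined by the added jump points together with the singleton jump points. -/
def cyclePieces (N : ℕ) (t : Fin N → ℝ) {k p : ℕ} (α : Fin k → ℕ)
    (s : Fin k → Fin p → ℝ) : Set (Set ℝ) :=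
  {P | (∃ i j, P = subPiece N t α s i j) ∨ (∃ i j, P = ({s i j} : Set ℝ))}

/-- `C̃_r`: points `x` of `⋃ᵢ I_{α i}` such that `r` is the smallest positive integer with
`x` and `σʳ(x)` in one common set of the refined partition. -/
def Ctil (N : ℕ) (t : Fin N → ℝ) (σ : Equiv.Perm ℝ) {k p : ℕ} (α : Fin k → ℕ)
    (s : Fin k → Fin p → ℝ) (r : ℕ) : Set ℝ :=
  {x | x ∈ ⋃ i, openPiece N t (α i) ∧
    IsLeast {j : ℕ | 0 < j ∧ ∃ P ∈ cyclePieces N t α s, x ∈ P ∧ (σ ^ j) x ∈ P} r}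

/-- The cyclic setup: `k` pairwise distinct open intervals `I_{α 0}, …, I_{α (k-1)}` of the
original partition, contained in `C_k` and permuted cyclically by `σ`, with `p` jump points
`s i 0 < ⋯ < s i (p-1)` added into each of them, and both the original algebra `𝒜` and the
refined algebra `𝒜_S` invariant under `σ` and `σ⁻¹`. -/
def CyclicSetup (N : ℕ) (t : Fin N → ℝ) (σ : Equiv.Perm ℝ) {k p : ℕ} (α : Fin k → ℕ)
    (s : Fin k → Fin p → ℝ) : Prop :=
  0 < k ∧ (∀ i, α i ≤ N) ∧ Function.Injective α ∧
  (∀ i j, s i j ∈ openPiece N t (α i)) ∧ (∀ i, StrictMono (s i)) ∧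
  (∀ i : Fin k, ∃ i' : Fin k, ((i' : ℕ) = ((i : ℕ) + 1) % k) ∧
    σ '' openPiece N t (α i) = openPiece N t (α i')) ∧
  (∀ i, openPiece N t (α i) ⊆ Ck N t σ k) ∧
  AlgInvariant (pcAlgOn (Set.range t)) σ ∧
  AlgInvariant (pcAlgOn (Set.range t)) σ.symm ∧
  AlgInvariant (pcAlgOn (Set.range t ∪ ⋃ i, Set.range (s i))) σ ∧
  AlgInvariant (pcAlgOn (Set.range t ∪ ⋃ i, Set.range (s i))) σ.symm

/-- `C_k` for the partition `P` of a general set `X`. -/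
def CkGen {X ι : Type*} (P : ι → Set X) (σ : Equiv.Perm X) (k : ℕ) : Set X :=
  {x | IsLeast {j : ℕ | 0 < j ∧ ∃ i, x ∈ P i ∧ (σ ^ j) x ∈ P i} k}

/-- `C̃_r` relative to a family `Q` of refined pieces inside the subset `base` of `X`. -/
def CtilGen {X ι : Type*} (σ : Equiv.Perm X) (Q : ι → Set X) (base : Set X) (r : ℕ) :
    Set X :=
  {x | x ∈ base ∧ IsLeast {j : ℕ | 0 < j ∧ ∃ i, x ∈ Q i ∧ (σ ^ j) x ∈ Q i} r}

/-- `C_∞`: points that never return to the partition set they lie in. -/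
def Cinf {X ι : Type*} (P : ι → Set X) (σ : Equiv.Perm X) : Set X :=
  {x | ∀ k : ℕ, 0 < k → ¬∃ i, x ∈ P i ∧ (σ ^ k) x ∈ P i}

end PaperTRS
namespace PaperTRS

/-!
The coefficient of `δⁿ` in `f * a - a * f` is `fₙ · (σ̃ⁿ(a) - a)`, so `f` commutes with `𝒜` exactly
when each `fₙ` vanishes wherever some `a ∈ 𝒜` separates `x` from `σ⁻ⁿ x`. For two such elements
`f, g` the products agree term by term: `fₙ · σ̃ⁿ(gₘ) = fₙ · gₘ = gₘ · σ̃ᵐ(fₙ)`.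
-/

lemma _root_.Finsupp.sum_single_self_apply {α M N : Type*} [Zero M] [AddCommMonoid N]
    (f : α →₀ M) (h : α → M → N) (h0 : ∀ a, h a 0 = 0) (a : α) :
    (f.sum fun b c => Finsupp.single b (h b c)) a = h a (f a) := by
  rw [Finsupp.sum_apply, Finsupp.sum_eq_single a]
  · exact Finsupp.single_eq_same
  · exact fun b _ hba => Finsupp.single_eq_of_ne' hba
  · intro; rw [h0, Finsupp.single_zero, Finsupp.zero_apply]

section

variable {X : Type*} {σ : Equiv.Perm X}

lemma cmul_single_zero_right (f : ℤ →₀ (X → ℂ)) (a : X → ℂ) :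
    cmul σ f (Finsupp.single 0 a) =
      f.sum fun m c => Finsupp.single m (fun x => c x * a ((σ ^ m)⁻¹ x)) := by
  refine Finsupp.sum_congr fun m _ => ?_
  rw [Finsupp.sum_single_index, add_zero]
  simp only [Pi.zero_apply, mul_zero]
  exact Finsupp.single_zero _

lemma cmul_single_zero_right_apply (f : ℤ →₀ (X → ℂ)) (a : X → ℂ) (n : ℤ) (x : X) :
    cmul σ f (Finsupp.single 0 a) n x = f n x * a ((σ ^ n)⁻¹ x) := by
  rw [cmul_single_zero_right,
    Finsupp.sum_single_self_apply _ _ fun _ => funext fun _ => zero_mul _]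

lemma cmul_single_zero_left_apply (f : ℤ →₀ (X → ℂ)) (a : X → ℂ) (n : ℤ) (x : X) :
    cmul σ (Finsupp.single 0 a) f n x = a x * f n x := by
  rw [cmul, Finsupp.sum_single_index]
  · simp only [zero_add]
    rw [Finsupp.sum_single_self_apply _ _ fun _ => funext fun _ => mul_zero _]
    rfl
  · simp only [Pi.zero_apply, zero_mul]
    exact Finset.sum_eq_zero fun _ _ => Finsupp.single_zero _

lemma mem_commutant_iff {A B : Subalgebra ℂ (X → ℂ)} {f : ℤ →₀ (X → ℂ)} :
    f ∈ commutant A B σ ↔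
      InCrossed B f ∧ ∀ n, ∀ a ∈ A, ∀ x, f n x * a ((σ ^ n)⁻¹ x) = a x * f n x := by
  simp only [commutant, Set.mem_ofPred_eq, Finsupp.ext_iff, funext_iff,
    cmul_single_zero_right_apply, cmul_single_zero_left_apply]
  exact and_congr_right fun _ => ⟨fun h n a ha x => h a ha n x, fun h a ha n x => h n a ha x⟩

lemma commutes_iff_eq_zero_on_Sep (A : Subalgebra ℂ (X → ℂ)) (n : ℤ) (c : X → ℂ) :
    (∀ a ∈ A, ∀ x, c x * a ((σ ^ n)⁻¹ x) = a x * c x) ↔ ∀ x ∈ Sep A σ n, c x = 0 := by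
  constructor
  · rintro h x ⟨a, ha, hne⟩
    by_contra hc
    exact hne (mul_left_cancel₀ hc ((h a ha x).trans (mul_comm _ _))).symm
  · intro h a ha x
    by_cases hx : x ∈ Sep A σ n
    · simp [h x hx]
    · have hax : a ((σ ^ n)⁻¹ x) = a x := by
        by_contra hne
        exact hx ⟨a, ha, Ne.symm hne⟩
      rw [hax, mul_comm]

lemma commutant_eq (A B : Subalgebra ℂ (X → ℂ)) :
    commutant A B σ = {f | InCrossed B f ∧ ∀ n : ℤ, ∀ x ∈ Sep A σ n, f n x = 0} := by
  ext f
  rw [mem_commutant_iff]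
  exact and_congr_right fun _ => forall_congr' fun n => commutes_iff_eq_zero_on_Sep A n (f n)

lemma single_zero_mem_commutant {A : Subalgebra ℂ (X → ℂ)} {a : X → ℂ} (ha : a ∈ A) :
    Finsupp.single 0 a ∈ commutant A A σ := by
  refine mem_commutant_iff.2 ⟨fun n => ?_, fun n b _ x => ?_⟩
  · rw [Finsupp.single_apply]
    split_ifs
    exacts [ha, zero_mem A]
  · rw [Finsupp.single_apply]
    split_ifs with h
    · subst h
      simp [mul_comm]
    · simp

lemma cmul_comm_of_mem_commutant {A : Subalgebra ℂ (X → ℂ)} {f g : ℤ →₀ (X → ℂ)}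
    (hf : f ∈ commutant A A σ) (hg : g ∈ commutant A A σ) : cmul σ f g = cmul σ g f := by
  rw [mem_commutant_iff] at hf hg
  rw [cmul, cmul, Finsupp.sum_comm]
  refine Finsupp.sum_congr fun m _ => Finsupp.sum_congr fun n _ => ?_
  rw [add_comm]
  congr 1
  funext x
  rw [hf.2 n (g m) (hg.1 m) x, hg.2 m (f n) (hf.1 n) x, mul_comm]

lemma subset_commutant_of_pairwise_commute {A : Subalgebra ℂ (X → ℂ)}
    {S : Set (ℤ →₀ (X → ℂ))} (hSA : ∀ f ∈ S, InCrossed A f)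
    (hAS : ∀ a ∈ A, Finsupp.single (0 : ℤ) a ∈ S)
    (hS : ∀ f ∈ S, ∀ g ∈ S, cmul σ f g = cmul σ g f) : S ⊆ commutant A A σ :=
  fun f hf => ⟨hSA f hf, fun a ha => hS f hf _ (hAS a ha)⟩

end

theorem statement0_general {X : Type*} (A : Subalgebra ℂ (X → ℂ)) (σ : Equiv.Perm X) :
    commutant A A σ =
      {f : ℤ →₀ (X → ℂ) | InCrossed A f ∧ ∀ n : ℤ, ∀ x ∈ Sep A σ n, f n x = 0} ∧
    (∀ a ∈ A, Finsupp.single (0 : ℤ) a ∈ commutant A A σ) ∧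
    (∀ f ∈ commutant A A σ, ∀ g ∈ commutant A A σ, cmul σ f g = cmul σ g f) ∧
    (∀ S : Set (ℤ →₀ (X → ℂ)),
      (∀ f ∈ S, InCrossed A f) →
      (∀ a ∈ A, Finsupp.single (0 : ℤ) a ∈ S) →
      (∀ f ∈ S, ∀ g ∈ S, f + g ∈ S) →
      (∀ c : ℂ, ∀ f ∈ S, c • f ∈ S) →
      (∀ f ∈ S, ∀ g ∈ S, cmul σ f g ∈ S) →
      (∀ f ∈ S, ∀ g ∈ S, cmul σ f g = cmul σ g f) →
      S ⊆ commutant A A σ) :=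
  ⟨commutant_eq A A, fun _ => single_zero_mem_commutant,
    fun _ hf _ hg => cmul_comm_of_mem_commutant hf hg,
    fun _ hSA hAS _ _ _ hS => subset_commutant_of_pairwise_commute hSA hAS hS⟩

/-- the commutant of `𝒜` in `𝒜 ⋊_σ̃ ℤ` is
`{Σ fₙδⁿ : fₙ vanishes on Sepⁿ_𝒜(X) for all n}`; it contains `𝒜`, it is commutative, and
every commutative subalgebra of the crossed product containing `𝒜` is contained in it. -/
theorem statement0 {X : Type*} (A : Subalgebra ℂ (X → ℂ)) (σ : Equiv.Perm X)
    (hinv : AlgInvariant A σ) (hinv' : AlgInvariant A σ.symm) :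
    commutant A A σ =
      {f : ℤ →₀ (X → ℂ) | InCrossed A f ∧ ∀ n : ℤ, ∀ x ∈ Sep A σ n, f n x = 0} ∧
    (∀ a ∈ A, Finsupp.single (0 : ℤ) a ∈ commutant A A σ) ∧
    (∀ f ∈ commutant A A σ, ∀ g ∈ commutant A A σ, cmul σ f g = cmul σ g f) ∧
    (∀ S : Set (ℤ →₀ (X → ℂ)),
      (∀ f ∈ S, InCrossed A f) →
      (∀ a ∈ A, Finsupp.single (0 : ℤ) a ∈ S) →
      (∀ f ∈ S, ∀ g ∈ S, f + g ∈ S) →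
      (∀ c : ℂ, ∀ f ∈ S, c • f ∈ S) →
      (∀ f ∈ S, ∀ g ∈ S, cmul σ f g ∈ S) →
      (∀ f ∈ S, ∀ g ∈ S, cmul σ f g = cmul σ g f) →
      S ⊆ commutant A A σ) :=
  statement0_general A σ

end PaperTRS
end
end

section
/- Let 𝒜 be the algebra of piecewise constant functions on ℝ with jumps at most at t₁ < ⋯ < t_N and let σ : ℝ → ℝ be a bijection. Then 𝒜 is invariant under both σ and σ⁻¹ if and only if (1) σ and σ⁻¹ map each jump point t_k (k = 1,…,N) onto another jump point, and (2) σ maps each open interval I_α (α = 0,1,…,N) bijectively onto one of the open intervals I₀, I₁, …, I_N. -/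
open scoped Classical

noncomputable section

namespace PaperTRS

section Aux

variable {N : ℕ} {t : Fin N → ℝ}


lemma tE_mono (ht : StrictMono t) {i j : ℕ} (hij : i ≤ j) : tE N t i ≤ tE N t j := by
  unfold tE
  by_cases h1 : 1 ≤ i ∧ i ≤ N
  · rw [dif_pos h1]
    by_cases h2 : 1 ≤ j ∧ j ≤ N
    · rw [dif_pos h2]
      exact EReal.coe_le_coe_iff.2 (ht.monotone (by simp [Fin.mk_le_mk]; omega))
    · rw [dif_neg h2, if_neg (by omega)]
      exact le_top
  · rw [dif_neg h1]
    by_cases h0 : i = 0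
    · rw [if_pos h0]; exact bot_le
    · rw [if_neg h0, dif_neg (by omega), if_neg (by omega)]

lemma tE_lt (ht : StrictMono t) {α : ℕ} (hα : α ≤ N) : tE N t α < tE N t (α + 1) := by
  unfold tE
  by_cases h1 : 1 ≤ α ∧ α ≤ N
  · rw [dif_pos h1]
    by_cases h2 : α + 1 ≤ N
    · rw [dif_pos ⟨by omega, h2⟩]
      exact EReal.coe_lt_coe_iff.2 (ht (by simp [Fin.mk_lt_mk]; omega))
    · rw [dif_neg (by omega), if_neg (by omega)]
      exact EReal.coe_lt_top _
  · have h0 : α = 0 := by omega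
    subst h0
    rw [dif_neg (by omega), if_pos rfl]
    by_cases h2 : 1 ≤ N
    · rw [dif_pos ⟨le_refl 1, h2⟩]; exact EReal.bot_lt_coe _
    · rw [dif_neg (by omega), if_neg (by omega)]; exact bot_lt_top

lemma tE_coe {i : ℕ} (h1 : 1 ≤ i) (h2 : i ≤ N) :
    tE N t i = ((t ⟨i - 1, by omega⟩ : ℝ) : EReal) := by
  rw [tE, dif_pos ⟨h1, h2⟩]

lemma tE_zero : tE N t 0 = ⊥ := by rw [tE, dif_neg (by omega), if_pos rfl]

lemma tE_gt_top {i : ℕ} (hi : N < i) : tE N t i = ⊤ := by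
  rw [tE, dif_neg (by omega), if_neg (by omega)]

/-- distinct pieces are disjoint -/
lemma openPiece_inj (ht : StrictMono t) {α β : ℕ} {x : ℝ}
    (hx : x ∈ openPiece N t α) (hy : x ∈ openPiece N t β) : α = β := by
  by_contra hne
  rcases Nat.lt_or_ge α β with h | h
  · exact absurd (lt_trans (lt_of_lt_of_le hx.2 (tE_mono ht (by omega))) hy.1)
      (lt_irrefl _)
  · have h' : β < α := by omega
    exact absurd (lt_trans (lt_of_lt_of_le hy.2 (tE_mono ht (by omega))) hx.1)
      (lt_irrefl _)

lemma openPiece_nonempty (ht : StrictMono t) {α : ℕ} (hα : α ≤ N) :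
    (openPiece N t α).Nonempty := by
  obtain ⟨x, hx1, hx2⟩ := EReal.exists_between_coe_real (tE_lt ht hα)
  exact ⟨x, hx1, hx2⟩

lemma exists_gt_in_openPiece {α : ℕ} {x : ℝ} (hx : x ∈ openPiece N t α) :
    ∃ y ∈ openPiece N t α, x ≠ y := by
  obtain ⟨y, hy1, hy2⟩ := EReal.exists_between_coe_real hx.2
  have hxy : x < y := by exact_mod_cast hy1
  exact ⟨y, ⟨lt_trans hx.1 hy1, hy2⟩, ne_of_lt hxy⟩

lemma openPiece_notMem_range (ht : StrictMono t) {α : ℕ} (hα : α ≤ N) {x : ℝ}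
    (hx : x ∈ openPiece N t α) : x ∉ Set.range t := by
  rintro ⟨j, rfl⟩
  have hj : tE N t ((j : ℕ) + 1) = ((t j : ℝ) : EReal) := by
    rw [tE_coe (by omega) (by omega)]
    norm_num
  rcases le_or_gt α (j : ℕ) with h | h
  · have h2 : tE N t (α + 1) ≤ ((t j : ℝ) : EReal) := hj ▸ tE_mono ht (by omega)
    exact absurd (lt_of_lt_of_le hx.2 h2) (lt_irrefl _)
  · have h1 : ((t j : ℝ) : EReal) ≤ tE N t α := hj ▸ tE_mono ht (by omega)
    exact absurd (lt_of_le_of_lt h1 hx.1) (lt_irrefl _)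

lemma exists_openPiece (ht : StrictMono t) {x : ℝ} (hx : x ∉ Set.range t) :
    ∃ α ≤ N, x ∈ openPiece N t α := by
  classical
  have hne : ∀ j : Fin N, t j ≠ x := fun j h => hx ⟨j, h⟩
  set S : Finset (Fin N) := Finset.univ.filter (fun j : Fin N => t j < x) with hS
  by_cases hSne : S.Nonempty
  · obtain ⟨j₀, hj₀S, hmax⟩ : ∃ j₀ ∈ S, ∀ j ∈ S, j ≤ j₀ :=
      ⟨S.max' hSne, S.max'_mem hSne, fun j hj => S.le_max' j hj⟩
    have hj₀lt : t j₀ < x := (Finset.mem_filter.1 hj₀S).2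
    refine ⟨(j₀ : ℕ) + 1, by omega, ?_, ?_⟩
    · rw [tE_coe (by omega) (by omega)]
      exact_mod_cast (by simpa using hj₀lt : t ⟨(j₀:ℕ)+1-1, by omega⟩ < x)
    · by_cases h2 : (j₀ : ℕ) + 1 + 1 ≤ N
      · rw [tE_coe (by omega) h2]
        have hmem : (⟨(j₀:ℕ)+1+1-1, by omega⟩ : Fin N) ∉ S := by
          intro hc
          have h3 := hmax _ hc
          have : ((j₀:ℕ)+1+1-1 : ℕ) ≤ (j₀ : ℕ) := by exact_mod_cast h3
          omega
        have hnlt : ¬ t ⟨(j₀:ℕ)+1+1-1, by omega⟩ < x := by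
          intro hc; exact hmem (Finset.mem_filter.2 ⟨Finset.mem_univ _, hc⟩)
        have hfin : x < t ⟨(j₀:ℕ)+1+1-1, by omega⟩ :=
          lt_of_le_of_ne (not_lt.1 hnlt) (fun h => hne _ h.symm)
        exact_mod_cast hfin
      · rw [tE_gt_top (by omega)]; exact EReal.coe_lt_top _
  · refine ⟨0, by omega, ?_, ?_⟩
    · rw [tE_zero]; exact EReal.bot_lt_coe _
    · by_cases h2 : 1 ≤ N
      · rw [tE_coe le_rfl h2]
        have hnlt : ¬ t ⟨0, by omega⟩ < x := by
          intro hc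
          exact hSne ⟨_, Finset.mem_filter.2 ⟨Finset.mem_univ _, hc⟩⟩
        have : x < t ⟨0, by omega⟩ :=
          lt_of_le_of_ne (not_lt.1 hnlt) (fun h => hne _ h.symm)
        exact_mod_cast this
      · rw [tE_gt_top (by omega)]; exact EReal.coe_lt_top _

lemma mem_same_piece (ht : StrictMono t) {α : ℕ} {x y : ℝ} (hα : α ≤ N)
    (hx : x ∈ openPiece N t α) (hy : y ∉ Set.range t)
    (hsep : ∀ u ∈ Set.range t, u ∉ Set.Icc (min x y) (max x y)) :
    y ∈ openPiece N t α := by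
  have hxl := hx.1
  have hxr := hx.2
  constructor
  · by_cases h0 : 1 ≤ α
    · rw [tE_coe h0 hα] at hxl ⊢
      have hx1 : t ⟨α - 1, by omega⟩ < x := by exact_mod_cast hxl
      by_contra hle
      have hyle : y ≤ t ⟨α - 1, by omega⟩ := by
        have := not_lt.1 (fun hc => hle (by exact_mod_cast hc : _ < (y : EReal)))
        exact_mod_cast this
      exact hsep _ ⟨_, rfl⟩ ⟨le_trans (min_le_right x y) hyle,
        le_trans (le_of_lt hx1) (le_max_left x y)⟩
    · have : α = 0 := by omega
      rw [this, tE_zero]; exact EReal.bot_lt_coe _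
  · by_cases h0 : α + 1 ≤ N
    · rw [tE_coe (by omega) h0] at hxr ⊢
      have hx2 : x < t ⟨α + 1 - 1, by omega⟩ := by exact_mod_cast hxr
      by_contra hle
      have hyge : t ⟨α + 1 - 1, by omega⟩ ≤ y := by
        have := not_lt.1 (fun hc => hle (by exact_mod_cast hc : (y : EReal) < _))
        exact_mod_cast this
      exact hsep _ ⟨_, rfl⟩ ⟨le_trans (min_le_left x y) (le_of_lt hx2),
        le_trans hyge (le_max_right x y)⟩
    · rw [tE_gt_top (by omega)]; exact EReal.coe_lt_top _

lemma same_piece_sep (ht : StrictMono t) {α : ℕ} {x y : ℝ} (hα : α ≤ N)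
    (hx : x ∈ openPiece N t α) (hy : y ∈ openPiece N t α) :
    ∀ u ∈ Set.range t, u ∉ Set.Icc (min x y) (max x y) := by
  intro u hu hmem
  have humem : u ∈ openPiece N t α := by
    constructor
    · have h1 : tE N t α < ((min x y : ℝ) : EReal) := by
        rcases le_total x y with h | h
        · rw [min_eq_left h]; exact hx.1
        · rw [min_eq_right h]; exact hy.1
      exact lt_of_lt_of_le h1 (by exact_mod_cast hmem.1)
    · have h1 : ((max x y : ℝ) : EReal) < tE N t (α + 1) := by
        rcases le_total x y with h | h
        · rw [max_eq_right h]; exact hy.2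
        · rw [max_eq_left h]; exact hx.2
      exact lt_of_le_of_lt (by exact_mod_cast hmem.2) h1
  exact openPiece_notMem_range ht hα humem hu



lemma mem_pcAlgOn_iff (ht : StrictMono t) {h : ℝ → ℂ} :
    h ∈ pcAlgOn (Set.range t) ↔
      ∀ α ≤ N, ∀ x ∈ openPiece N t α, ∀ y ∈ openPiece N t α, h x = h y := by
  constructor
  · intro hh α hα x hx y hy
    exact hh x y (openPiece_notMem_range ht hα hx) (openPiece_notMem_range ht hα hy)
      (same_piece_sep ht hα hx hy)
  · intro hh x y hx hy hsep
    obtain ⟨α, hα, hxα⟩ := exists_openPiece ht hx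
    exact hh α hα x hxα y (mem_same_piece ht hα hxα hy hsep)

lemma indicator_piece_mem (ht : StrictMono t) {β : ℕ} (hβ : β ≤ N) :
    (fun x => if x ∈ openPiece N t β then (1 : ℂ) else 0) ∈ pcAlgOn (Set.range t) := by
  rw [mem_pcAlgOn_iff ht]
  intro α hα x hx y hy
  by_cases hb : α = β
  · subst hb; simp only [if_pos hx, if_pos hy]
  · rw [if_neg (fun hc => hb (openPiece_inj ht hx hc)),
      if_neg (fun hc => hb (openPiece_inj ht hy hc))]

lemma indicator_t_mem (j : Fin N) :
    (fun x => if x = t j then (1 : ℂ) else 0) ∈ pcAlgOn (Set.range t) := by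
  intro x y hx hy _
  simp only
  rw [if_neg (fun hc => hx ⟨j, hc.symm⟩), if_neg (fun hc => hy ⟨j, hc.symm⟩)]

lemma image_piece (ht : StrictMono t) {σ : Equiv.Perm ℝ}
    (hσ : AlgInvariant (pcAlgOn (Set.range t)) σ) {α : ℕ} (hα : α ≤ N) :
    ∃ β ≤ N, σ '' openPiece N t α ⊆ openPiece N t β := by
  obtain ⟨x₀, hx₀⟩ := openPiece_nonempty ht hα
  have hσx₀ : σ x₀ ∉ Set.range t := by
    rintro ⟨j, hj⟩
    obtain ⟨x₁, hx₁, hne⟩ := exists_gt_in_openPiece hx₀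
    have hmem := hσ _ (indicator_t_mem j)
    rw [mem_pcAlgOn_iff ht] at hmem
    have heq := hmem α hα x₀ hx₀ x₁ hx₁
    simp only [Function.comp_apply] at heq
    rw [if_pos hj.symm, if_neg (fun hc => hne (σ.injective (hj.symm.trans hc.symm)))] at heq
    exact one_ne_zero heq
  obtain ⟨β, hβ, hx₀β⟩ := exists_openPiece ht hσx₀
  refine ⟨β, hβ, ?_⟩
  rintro _ ⟨x, hx, rfl⟩
  have hmem := hσ _ (indicator_piece_mem ht hβ)
  rw [mem_pcAlgOn_iff ht] at hmem
  have heq := hmem α hα x hx x₀ hx₀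
  simp only [Function.comp_apply] at heq
  rw [if_pos hx₀β] at heq
  by_contra hc
  rw [if_neg hc] at heq
  exact one_ne_zero heq.symm

lemma image_piece_eq (ht : StrictMono t) {σ : Equiv.Perm ℝ}
    (hσ : AlgInvariant (pcAlgOn (Set.range t)) σ)
    (hσ' : AlgInvariant (pcAlgOn (Set.range t)) σ.symm) {α : ℕ} (hα : α ≤ N) :
    ∃ β ≤ N, σ '' openPiece N t α = openPiece N t β := by
  obtain ⟨β, hβ, h1⟩ := image_piece ht hσ hα
  obtain ⟨γ, hγ, h2⟩ := image_piece ht (σ := σ.symm) hσ' hβ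
  obtain ⟨x₀, hx₀⟩ := openPiece_nonempty ht hα
  have hx₀γ : x₀ ∈ openPiece N t γ := by
    have : σ.symm (σ x₀) ∈ openPiece N t γ := h2 ⟨σ x₀, h1 ⟨x₀, hx₀, rfl⟩, rfl⟩
    simpa using this
  have hg : γ = α := openPiece_inj ht hx₀γ hx₀
  subst hg
  refine ⟨β, hβ, Set.Subset.antisymm h1 ?_⟩
  intro y hy
  exact ⟨σ.symm y, h2 ⟨y, hy, rfl⟩, by simp⟩

/-- surjectivity of the induced index map -/
lemma piece_perm_surj (ht : StrictMono t) {σ : Equiv.Perm ℝ}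
    (hP : ∀ a ≤ N, ∃ b ≤ N, σ '' openPiece N t a = openPiece N t b) :
    ∀ b ≤ N, ∃ a ≤ N, σ '' openPiece N t a = openPiece N t b := by
  have hf : ∀ a : Fin (N + 1), ∃ b : Fin (N + 1),
      σ '' openPiece N t (a : ℕ) = openPiece N t (b : ℕ) := by
    intro a
    obtain ⟨b, hb, hab⟩ := hP (a : ℕ) (by omega)
    exact ⟨⟨b, by omega⟩, hab⟩
  choose f hf using hf
  have hinj : Function.Injective f := by
    intro a a' haa
    obtain ⟨x, hx⟩ := openPiece_nonempty ht (show (a : ℕ) ≤ N by omega)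
    have h1 : σ '' openPiece N t (a : ℕ) = σ '' openPiece N t (a' : ℕ) := by
      rw [hf a, hf a', haa]
    have h2 : openPiece N t (a : ℕ) = openPiece N t (a' : ℕ) :=
      Set.image_injective.2 σ.injective h1
    have : x ∈ openPiece N t (a' : ℕ) := h2 ▸ hx
    exact Fin.ext (openPiece_inj ht hx this)
  have hsurj := Finite.surjective_of_injective hinj
  intro b hb
  obtain ⟨a, ha⟩ := hsurj ⟨b, by omega⟩
  refine ⟨(a : ℕ), by omega, ?_⟩
  rw [hf a, ha]

lemma symm_image_piece (ht : StrictMono t) {σ : Equiv.Perm ℝ}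
    (hP : ∀ a ≤ N, ∃ b ≤ N, σ '' openPiece N t a = openPiece N t b) {β : ℕ}
    (hβ : β ≤ N) : ∃ α ≤ N, σ.symm '' openPiece N t β = openPiece N t α := by
  obtain ⟨a, ha, hab⟩ := piece_perm_surj ht hP β hβ
  refine ⟨a, ha, ?_⟩
  rw [← hab, Equiv.symm_image_image]

/-- σ maps the jump set into the jump set -/
lemma sigma_t_mem (ht : StrictMono t) {σ : Equiv.Perm ℝ}
    (hP : ∀ a ≤ N, ∃ b ≤ N, σ '' openPiece N t a = openPiece N t b) (k : Fin N) :
    ∃ j : Fin N, σ (t k) = t j := by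
  by_contra h
  push_neg at h
  have hmem : σ (t k) ∉ Set.range t := by rintro ⟨j, hj⟩; exact h j hj.symm
  obtain ⟨β, hβ, hb⟩ := exists_openPiece ht hmem
  obtain ⟨a, ha, hab⟩ := piece_perm_surj ht hP β hβ
  rw [← hab] at hb
  obtain ⟨x, hx, hxe⟩ := hb
  have : x = t k := σ.injective hxe
  subst this
  exact openPiece_notMem_range ht ha hx ⟨k, rfl⟩

end Aux

/-- the algebra `𝒜` of piecewise constant functions with jumps at most at
`t₁ < ⋯ < t_N` is invariant under both `σ` and `σ⁻¹` iff (1) `σ` and `σ⁻¹` map each jump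
point onto a jump point and (2) `σ` maps each open interval `I_α` bijectively onto one of
the open intervals `I₀, …, I_N`. -/
theorem statement1 (N : ℕ) (t : Fin N → ℝ) (ht : StrictMono t) (σ : Equiv.Perm ℝ) :
    (AlgInvariant (pcAlgOn (Set.range t)) σ ∧
      AlgInvariant (pcAlgOn (Set.range t)) σ.symm) ↔
    ((∀ k : Fin N, (∃ j : Fin N, σ (t k) = t j) ∧ (∃ j : Fin N, σ.symm (t k) = t j)) ∧
      (∀ a : ℕ, a ≤ N → ∃ b : ℕ, b ≤ N ∧ σ '' openPiece N t a = openPiece N t b)) := by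
  constructor
  · rintro ⟨hσ, hσ'⟩
    have hP : ∀ a ≤ N, ∃ b ≤ N, σ '' openPiece N t a = openPiece N t b :=
      fun a ha => image_piece_eq ht hσ hσ' ha
    have hσ'' : AlgInvariant (pcAlgOn (Set.range t)) σ.symm.symm := by
      rw [Equiv.symm_symm]; exact hσ
    have hP' : ∀ a ≤ N, ∃ b ≤ N, σ.symm '' openPiece N t a = openPiece N t b :=
      fun a ha => image_piece_eq ht hσ' hσ'' ha
    exact ⟨fun k => ⟨sigma_t_mem ht hP k, sigma_t_mem ht hP' k⟩,
      fun a ha => hP a ha⟩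
  · rintro ⟨-, hP⟩
    constructor
    · intro h hh
      rw [mem_pcAlgOn_iff ht] at hh ⊢
      intro α hα x hx y hy
      obtain ⟨β, hβ, hab⟩ := hP α hα
      simp only [Function.comp_apply]
      exact hh β hβ (σ x) (hab ▸ ⟨x, hx, rfl⟩) (σ y) (hab ▸ ⟨y, hy, rfl⟩)
    · intro h hh
      rw [mem_pcAlgOn_iff ht] at hh ⊢
      intro β hβ x hx y hy
      obtain ⟨α, hα, hab⟩ := symm_image_piece ht hP hβ
      simp only [Function.comp_apply]
      exact hh α hα (σ.symm x) (hab ▸ ⟨x, hx, rfl⟩) (σ.symm y) (hab ▸ ⟨y, hy, rfl⟩)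


end PaperTRS
end
end

section
/- Let 𝒜 be the algebra of piecewise constant functions on ℝ with jumps at most at t₁ < ⋯ < t_N, let σ : ℝ → ℝ be a bijection such that 𝒜 is invariant under σ and σ⁻¹, and let σ̃ be the induced automorphism of 𝒜. Then for every n ∈ ℤ, Sepⁿ_𝒜(ℝ) = ⋃_{k ∤ n} C_k, where the union is over all positive integers k that do not divide n. -/
open scoped Classical

noncomputable section

/-!
Call two points equivalent when no function of `𝒜` separates them. For `𝒜` the classes are
exactly the sets `I_α`, so there are finitely many. Invariance of `𝒜` under `σ` and `σ⁻¹` means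
that `σ` permutes the classes; then `x ∈ Sepⁿ` iff the `n`-th power of this permutation moves the
class of `x`, i.e. iff the period of that class, which is the `k` with `x ∈ C_k`, does not
divide `n`.
-/

namespace PaperTRS

open Function Set

section Separation

variable {X : Type*}

def sepSetoid (A : Subalgebra ℂ (X → ℂ)) : Setoid X where
  r x y := ∀ h ∈ A, h x = h y
  iseqv := ⟨fun _ _ _ => rfl, fun hxy h hh => (hxy h hh).symm,
    fun hxy hyz h hh => (hxy h hh).trans (hyz h hh)⟩

variable {A : Subalgebra ℂ (X → ℂ)}

lemma sepSetoid_apply {x y : X} : sepSetoid A x y ↔ ∀ h ∈ A, h x = h y := Iff.rfl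

lemma sep_eq_setOf_not_sepSetoid (σ : Equiv.Perm X) (n : ℤ) :
    Sep A σ n = {x | ¬ sepSetoid A x ((σ ^ n)⁻¹ x)} := by
  ext x
  simp [Sep, sepSetoid_apply]

lemma sepSetoid_iff_apply {σ : Equiv.Perm X} (hinv : AlgInvariant A σ)
    (hinv' : AlgInvariant A σ.symm) (x y : X) :
    sepSetoid A x y ↔ sepSetoid A (σ x) (σ y) := by
  refine ⟨fun hxy h hh => hxy (h ∘ σ) (hinv h hh), fun hσxy h hh => ?_⟩
  simpa using hσxy (h ∘ σ.symm) (hinv' h hh)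

end Separation

section ReturnTime

variable {X : Type*} {r : Setoid X} {σ : Equiv.Perm X}

def quotientPerm (hσ : ∀ x y, r x y ↔ r (σ x) (σ y)) : Equiv.Perm (Quotient r) :=
  Quotient.congr σ hσ

lemma quotientPerm_zpow_mk (hσ : ∀ x y, r x y ↔ r (σ x) (σ y)) (m : ℤ) (x : X) :
    (quotientPerm hσ ^ m) ⟦x⟧ = ⟦(σ ^ m) x⟧ := by
  induction m using Int.induction_on generalizing x with
  | zero => rfl
  | succ i ih =>
    rw [zpow_add_one, zpow_add_one, Equiv.Perm.mul_apply, Equiv.Perm.mul_apply, ← ih]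
    rfl
  | pred i ih =>
    rw [zpow_sub_one, zpow_sub_one, Equiv.Perm.mul_apply, Equiv.Perm.mul_apply, ← ih]
    rfl

lemma rel_zpow_iff_dvd (hσ : ∀ x y, r x y ↔ r (σ x) (σ y)) (x : X) (m : ℤ) :
    r x ((σ ^ m) x) ↔ (minimalPeriod (quotientPerm hσ) ⟦x⟧ : ℤ) ∣ m := by
  have h := MulAction.zpow_smul_eq_iff_minimalPeriod_dvd (a := quotientPerm hσ)
    (b := (⟦x⟧ : Quotient r)) (n := m)
  rwa [Equiv.Perm.smul_def, quotientPerm_zpow_mk, Quotient.eq, Setoid.comm'] at h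

lemma isLeast_minimalPeriod_quotientPerm [Finite (Quotient r)]
    (hσ : ∀ x y, r x y ↔ r (σ x) (σ y)) (x : X) :
    IsLeast {j : ℕ | 0 < j ∧ r x ((σ ^ j) x)} (minimalPeriod (quotientPerm hσ) ⟦x⟧) := by
  have hpos : 0 < minimalPeriod (quotientPerm hσ) ⟦x⟧ :=
    Nat.pos_of_ne_zero (MulAction.minimalPeriod_pos (quotientPerm hσ) ⟦x⟧).out
  have hrel (j : ℕ) : r x ((σ ^ j) x) ↔ minimalPeriod (quotientPerm hσ) ⟦x⟧ ∣ j := by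
    have h := rel_zpow_iff_dvd hσ x j
    rwa [zpow_natCast, Int.natCast_dvd_natCast] at h
  exact ⟨⟨hpos, (hrel _).2 dvd_rfl⟩, fun j ⟨hj, hjr⟩ => Nat.le_of_dvd hj ((hrel j).1 hjr)⟩

theorem setOf_not_rel_zpow_inv_eq_iUnion [Finite (Quotient r)]
    (hσ : ∀ x y, r x y ↔ r (σ x) (σ y)) (n : ℤ) :
    {x | ¬ r x ((σ ^ n)⁻¹ x)} =
      ⋃ (k : ℕ) (_ : 0 < k ∧ ¬ (k : ℤ) ∣ n),
        {x | IsLeast {j : ℕ | 0 < j ∧ r x ((σ ^ j) x)} k} := by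
  ext x
  have hleast := isLeast_minimalPeriod_quotientPerm hσ x
  simp only [mem_ofPred_eq, mem_iUnion, exists_prop, ← zpow_neg, rel_zpow_iff_dvd hσ,
    dvd_neg]
  constructor
  · exact fun h => ⟨_, ⟨hleast.1.1, h⟩, hleast⟩
  · rintro ⟨k, ⟨-, hk⟩, hkleast⟩
    rwa [hkleast.unique hleast] at hk

end ReturnTime

section PiecewiseConstant

variable {T : Set ℝ}

lemma indicator_Iio_mem_pcAlgOn {u : ℝ} (hu : u ∈ T) : (Iio u).indicator 1 ∈ pcAlgOn T := by
  intro a b _ _ hab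
  have hu_notMem := hab u hu
  have hiff : a < u ↔ b < u := by grind [min_le_iff, le_max_iff]
  simp [indicator, hiff]

lemma indicator_Ioi_mem_pcAlgOn {u : ℝ} (hu : u ∈ T) : (Ioi u).indicator 1 ∈ pcAlgOn T := by
  intro a b _ _ hab
  have hu_notMem := hab u hu
  have hiff : u < a ↔ u < b := by grind [min_le_iff, le_max_iff]
  simp [indicator, hiff]

lemma disjoint_Icc_of_sepSetoid_pcAlgOn {x y : ℝ} (hxy : x < y)
    (h : sepSetoid (pcAlgOn T) x y) : Disjoint T (Icc x y) := by
  rw [disjoint_left]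
  rintro u hu ⟨hxu, huy⟩
  rcases huy.lt_or_eq with huy | rfl
  · simpa [hxu.not_gt, huy] using h _ (indicator_Ioi_mem_pcAlgOn hu)
  · simpa [hxy] using h _ (indicator_Iio_mem_pcAlgOn hu)

lemma sepSetoid_pcAlgOn_iff {x y : ℝ} :
    sepSetoid (pcAlgOn T) x y ↔ x = y ∨ Disjoint T (uIcc x y) := by
  constructor
  · intro h
    rcases lt_trichotomy x y with hlt | heq | hgt
    · exact Or.inr (uIcc_of_le hlt.le ▸ disjoint_Icc_of_sepSetoid_pcAlgOn hlt h)
    · exact Or.inl heq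
    · exact Or.inr (uIcc_of_ge hgt.le ▸
        disjoint_Icc_of_sepSetoid_pcAlgOn hgt ((sepSetoid _).symm' h))
  · rintro (rfl | hd) f hf
    · rfl
    · exact hf x y (disjoint_right.1 hd left_mem_uIcc) (disjoint_right.1 hd right_mem_uIcc)
        fun u hu => disjoint_left.1 hd hu

end PiecewiseConstant

section Pieces

variable {N : ℕ} {t : Fin N → ℝ}

lemma tE_succ {i : ℕ} (hi : i < N) : tE N t (i + 1) = t ⟨i, hi⟩ := by
  simp [tE, hi]

lemma tE_succ_of_le {i : ℕ} (hi : N ≤ i) : tE N t (i + 1) = ⊤ := by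
  simp [tE, show ¬ i + 1 ≤ N by omega]

lemma ordConnected_openPiece (i : ℕ) : (openPiece N t i).OrdConnected :=
  ⟨fun _ ha _ hb _ hz => ⟨ha.1.trans_le (EReal.coe_le_coe_iff.2 hz.1),
    (EReal.coe_le_coe_iff.2 hz.2).trans_lt hb.2⟩⟩

lemma t_notMem_openPiece (ht : Monotone t) {i : ℕ} (hi : i ≤ N) (j : Fin N) :
    t j ∉ openPiece N t i := by
  rintro ⟨hlo, hhi⟩
  rcases Nat.lt_or_ge j i with hji | hij
  · obtain ⟨i, rfl⟩ : ∃ i', i = i' + 1 := ⟨i - 1, by omega⟩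
    rw [tE_succ (by omega)] at hlo
    exact (EReal.coe_lt_coe_iff.1 hlo).not_ge (ht (Fin.mk_le_mk.2 (by omega)))
  · rw [tE_succ (hij.trans_lt j.isLt)] at hhi
    exact (EReal.coe_lt_coe_iff.1 hhi).not_ge (ht (Fin.mk_le_mk.2 hij))

lemma mem_openPiece_of_disjoint {i : ℕ} (hi : i ≤ N) {x y : ℝ} (hy : y ∈ openPiece N t i)
    (hd : Disjoint (range t) (uIcc x y)) : x ∈ openPiece N t i := by
  have hnot (j : Fin N) : t j ∉ uIcc x y := disjoint_left.1 hd ⟨j, rfl⟩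
  obtain ⟨hylo, hyhi⟩ := hy
  constructor
  · cases i with
    | zero => exact EReal.bot_lt_coe x
    | succ i =>
      rw [tE_succ (by omega)] at hylo ⊢
      have := hnot ⟨i, by omega⟩
      grind [EReal.coe_lt_coe_iff, mem_uIcc]
  · rcases hi.lt_or_eq with hi | rfl
    · rw [tE_succ hi] at hyhi ⊢
      have := hnot ⟨i, hi⟩
      grind [EReal.coe_lt_coe_iff, mem_uIcc]
    · rw [tE_succ_of_le le_rfl]
      exact EReal.coe_lt_top x

lemma exists_mem_pieces (x : ℝ) : ∃ P ∈ pieces N t, x ∈ P := by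
  by_cases hx : x ∈ range t
  · obtain ⟨j, rfl⟩ := hx
    exact ⟨_, Or.inr ⟨j, rfl⟩, rfl⟩
  set i := Nat.findGreatest (fun i => tE N t i < x) N
  have hiN : i ≤ N := Nat.findGreatest_le N
  refine ⟨openPiece N t i, Or.inl ⟨i, hiN, rfl⟩,
    Nat.findGreatest_spec (P := fun i => tE N t i < x) (Nat.zero_le N) (EReal.bot_lt_coe x), ?_⟩
  rcases hiN.lt_or_eq with hiN | hiN
  · have hnext := Nat.findGreatest_is_greatest (Nat.lt_succ_self i) hiN
    rw [tE_succ hiN, not_lt] at hnext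
    rw [tE_succ hiN]
    exact hnext.lt_of_ne fun h => hx ⟨_, EReal.coe_eq_coe_iff.1 h.symm⟩
  · rw [hiN, tE_succ_of_le le_rfl]
    exact EReal.coe_lt_top x

lemma mem_of_mem_pieces {P : Set ℝ} (hP : P ∈ pieces N t) {x y : ℝ} (hy : y ∈ P)
    (hxy : x = y ∨ Disjoint (range t) (uIcc x y)) : x ∈ P := by
  rcases hxy with rfl | hd
  · exact hy
  rcases hP with ⟨i, hi, rfl⟩ | ⟨j, rfl⟩
  · exact mem_openPiece_of_disjoint hi hy hd
  · exact absurd right_mem_uIcc (disjoint_left.1 hd ⟨j, hy.symm⟩)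

lemma eq_or_disjoint_of_mem_pieces (ht : Monotone t) {P : Set ℝ} (hP : P ∈ pieces N t)
    {x y : ℝ} (hx : x ∈ P) (hy : y ∈ P) : x = y ∨ Disjoint (range t) (uIcc x y) := by
  rcases hP with ⟨i, hi, rfl⟩ | ⟨j, rfl⟩
  · refine Or.inr (disjoint_left.2 ?_)
    rintro _ ⟨j, rfl⟩ hj
    exact t_notMem_openPiece ht hi j ((ordConnected_openPiece i).uIcc_subset hx hy hj)
  · exact Or.inl (hx.trans hy.symm)

lemma sepSetoid_pcAlgOn_range_iff (ht : Monotone t) {x y : ℝ} :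
    sepSetoid (pcAlgOn (range t)) x y ↔ ∃ P ∈ pieces N t, x ∈ P ∧ y ∈ P := by
  rw [sepSetoid_pcAlgOn_iff]
  refine ⟨fun hxy => ?_, fun ⟨P, hP, hx, hy⟩ => eq_or_disjoint_of_mem_pieces ht hP hx hy⟩
  obtain ⟨P, hP, hy⟩ := exists_mem_pieces (t := t) y
  exact ⟨P, hP, mem_of_mem_pieces hP hy hxy, hy⟩

lemma classes_sepSetoid_pcAlgOn_subset (ht : Monotone t) :
    (sepSetoid (pcAlgOn (range t))).classes ⊆ pieces N t := by
  rintro _ ⟨y, rfl⟩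
  obtain ⟨P, hP, hy⟩ := exists_mem_pieces (t := t) y
  convert hP
  ext x
  rw [mem_ofPred_eq, sepSetoid_pcAlgOn_iff]
  exact ⟨mem_of_mem_pieces hP hy, fun hx => eq_or_disjoint_of_mem_pieces ht hP hx hy⟩

lemma pieces_finite : (pieces N t).Finite := by
  refine ((finite_range fun i : Fin (N + 1) => openPiece N t i).union
    (finite_range fun j => ({t j} : Set ℝ))).subset ?_
  rintro _ (⟨i, hi, rfl⟩ | ⟨j, rfl⟩)
  exacts [Or.inl ⟨⟨i, by omega⟩, rfl⟩, Or.inr ⟨j, rfl⟩]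

lemma finite_quotient_sepSetoid_pcAlgOn (ht : Monotone t) :
    Finite (Quotient (sepSetoid (pcAlgOn (range t)))) :=
  have : Finite (sepSetoid (pcAlgOn (range t))).classes :=
    (pieces_finite.subset (classes_sepSetoid_pcAlgOn_subset ht)).to_subtype
  Finite.of_equiv _ (Setoid.quotientEquivClasses _).symm

end Pieces

/-- for every `n ∈ ℤ`, `Sepⁿ_𝒜(ℝ) = ⋃_{k ∤ n} C_k`, the union being over the
positive integers `k` not dividing `n`. -/
theorem statement2 (N : ℕ) (t : Fin N → ℝ) (ht : StrictMono t) (σ : Equiv.Perm ℝ)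
    (hinv : AlgInvariant (pcAlgOn (Set.range t)) σ)
    (hinv' : AlgInvariant (pcAlgOn (Set.range t)) σ.symm) :
    ∀ n : ℤ, Sep (pcAlgOn (Set.range t)) σ n =
      ⋃ (k : ℕ) (_ : 0 < k ∧ ¬((k : ℤ) ∣ n)), Ck N t σ k := by
  intro n
  have := finite_quotient_sepSetoid_pcAlgOn ht.monotone
  have hCk (k : ℕ) : Ck N t σ k =
      {x | IsLeast {j : ℕ | 0 < j ∧ sepSetoid (pcAlgOn (range t)) x ((σ ^ j) x)} k} := by
    simp only [Ck, sepSetoid_pcAlgOn_range_iff ht.monotone]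
  rw [sep_eq_setOf_not_sepSetoid,
    setOf_not_rel_zpow_inv_eq_iUnion (sepSetoid_iff_apply hinv hinv')]
  simp only [hCk]

end PaperTRS
end
end

section
/- With the cyclic setup in the context (intervals I_{α₁},…,I_{α_k} ⊆ C_k permuted cyclically by σ, and p jump points added into each), let x ∈ I_{αᵢ} for some i. Then the subinterval I_{αᵢ}^j of the refined partition containing x satisfies I_{αᵢ}^j ⊆ C̃_{k·l} for some l ∈ {1, 2, …, p+1}; in particular x ∈ C̃_{k·l} for some l ∈ {1,…,p+1}. -/
open scoped Classical

noncomputable section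

namespace PaperTRS

/-! ### Auxiliary development for Statement 8 -/

section Aux

variable {N : ℕ} {t : Fin N → ℝ}

lemma tE_pos {a : ℕ} (h1 : 1 ≤ a) (h2 : a ≤ N) :
    tE N t a = ((t ⟨a - 1, by omega⟩ : ℝ) : EReal) := by
  rw [tE, dif_pos ⟨h1, h2⟩]

lemma tE_top {a : ℕ} (h : N < a) : tE N t a = ⊤ := by
  rw [tE, dif_neg (by omega), if_neg (by omega)]

lemma mem_openPiece_iff (ht : StrictMono t) {a : ℕ} (ha : a ≤ N) {x : ℝ} :
    x ∈ openPiece N t a ↔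
      (∀ m : Fin N, (m : ℕ) < a → t m < x) ∧ (∀ m : Fin N, a ≤ (m : ℕ) → x < t m) := by
  constructor
  · rintro ⟨h1, h2⟩
    constructor
    · intro m hm
      have ha1 : 1 ≤ a := by omega
      rw [tE_pos ha1 ha] at h1
      have h1' : t ⟨a - 1, by omega⟩ < x := EReal.coe_lt_coe_iff.1 h1
      have hle : t m ≤ t ⟨a - 1, by omega⟩ := ht.monotone (by simp [Fin.le_def]; omega)
      linarith
    · intro m hm
      have haN : a + 1 ≤ N := by have := m.isLt; omega
      rw [tE_pos (by omega) haN] at h2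
      have h2' : x < t ⟨a + 1 - 1, by omega⟩ := EReal.coe_lt_coe_iff.1 h2
      have hle : t ⟨a + 1 - 1, by omega⟩ ≤ t m := ht.monotone (by simp [Fin.le_def]; omega)
      linarith
  · rintro ⟨h1, h2⟩
    constructor
    · rcases Nat.eq_zero_or_pos a with h | h
      · rw [h, tE_zero]; exact EReal.bot_lt_coe x
      · rw [tE_pos h ha]
        exact EReal.coe_lt_coe_iff.2 (h1 ⟨a - 1, by omega⟩ (by simp; omega))
    · rcases eq_or_lt_of_le ha with h | h
      · rw [tE_top (by omega)]; exact EReal.coe_lt_top x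
      · rw [tE_pos (by omega) (by omega)]
        exact EReal.coe_lt_coe_iff.2 (h2 ⟨a + 1 - 1, by omega⟩ (by simp))

lemma openPiece_eq_of_mem (ht : StrictMono t) {a b : ℕ} (ha : a ≤ N) (hb : b ≤ N)
    {x : ℝ} (hxa : x ∈ openPiece N t a) (hxb : x ∈ openPiece N t b) : a = b := by
  rcases lt_trichotomy a b with h | h | h
  · exfalso
    have h1 := ((mem_openPiece_iff ht ha).1 hxa).2 ⟨a, by omega⟩ (by simp)
    have h2 := ((mem_openPiece_iff ht hb).1 hxb).1 ⟨a, by omega⟩ (by simpa using h)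
    linarith
  · exact h
  · exfalso
    have h1 := ((mem_openPiece_iff ht hb).1 hxb).2 ⟨b, by omega⟩ (by simp)
    have h2 := ((mem_openPiece_iff ht ha).1 hxa).1 ⟨b, by omega⟩ (by simpa using h)
    linarith

variable {k p : ℕ} {α : Fin k → ℕ} {s : Fin k → Fin p → ℝ}

lemma mem_subPiece_iff (ht : StrictMono t) (hαN : ∀ i, α i ≤ N)
    (hsmem : ∀ i j, s i j ∈ openPiece N t (α i)) (hsmono : ∀ i, StrictMono (s i))
    {i : Fin k} {j : Fin (p + 1)} {x : ℝ} :
    x ∈ subPiece N t α s i j ↔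
      x ∈ openPiece N t (α i) ∧ (∀ j' : Fin p, (j' : ℕ) < (j : ℕ) → s i j' < x) ∧
        (∀ j' : Fin p, (j : ℕ) ≤ (j' : ℕ) → x < s i j') := by
  constructor
  · rintro ⟨h1, h2⟩
    have hlo : tE N t (α i) < (x : EReal) := by
      by_cases hj0 : (j : ℕ) = 0
      · rwa [dif_pos hj0] at h1
      · rw [dif_neg hj0] at h1
        exact lt_trans (hsmem i ⟨(j : ℕ) - 1, by have := j.isLt; omega⟩).1 h1
    have hhi : (x : EReal) < tE N t (α i + 1) := by
      by_cases hjp : (j : ℕ) = p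
      · rwa [dif_pos hjp] at h2
      · rw [dif_neg hjp] at h2
        exact lt_trans h2 (hsmem i ⟨(j : ℕ), by have := j.isLt; omega⟩).2
    refine ⟨⟨hlo, hhi⟩, ?_, ?_⟩
    · intro j' hj'
      have hj0 : (j : ℕ) ≠ 0 := by omega
      rw [dif_neg hj0] at h1
      have h1' : s i ⟨(j : ℕ) - 1, by have := j.isLt; omega⟩ < x := EReal.coe_lt_coe_iff.1 h1
      have hle : s i j' ≤ s i ⟨(j : ℕ) - 1, by have := j.isLt; omega⟩ :=
        (hsmono i).monotone (by simp [Fin.le_def]; omega)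
      linarith
    · intro j' hj'
      have hjp : (j : ℕ) ≠ p := by have := j'.isLt; omega
      rw [dif_neg hjp] at h2
      have h2' : x < s i ⟨(j : ℕ), by have := j.isLt; omega⟩ := EReal.coe_lt_coe_iff.1 h2
      have hle : s i ⟨(j : ℕ), by have := j.isLt; omega⟩ ≤ s i j' :=
        (hsmono i).monotone (by simp [Fin.le_def]; omega)
      linarith
  · rintro ⟨hop, hlo, hhi⟩
    constructor
    · by_cases hj0 : (j : ℕ) = 0
      · rw [dif_pos hj0]; exact hop.1
      · rw [dif_neg hj0]
        exact EReal.coe_lt_coe_iff.2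
          (hlo ⟨(j : ℕ) - 1, by have := j.isLt; omega⟩ (by show (j : ℕ) - 1 < (j : ℕ); omega))
    · by_cases hjp : (j : ℕ) = p
      · rw [dif_pos hjp]; exact hop.2
      · rw [dif_neg hjp]
        exact EReal.coe_lt_coe_iff.2
          (hhi ⟨(j : ℕ), by have := j.isLt; omega⟩ (by simp))

lemma subPiece_subset (ht : StrictMono t) (hαN : ∀ i, α i ≤ N)
    (hsmem : ∀ i j, s i j ∈ openPiece N t (α i)) (hsmono : ∀ i, StrictMono (s i))
    {i : Fin k} {j : Fin (p + 1)} :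
    subPiece N t α s i j ⊆ openPiece N t (α i) := fun _ hx =>
  ((mem_subPiece_iff ht hαN hsmem hsmono).1 hx).1

lemma not_mem_T_of_mem_subPiece (ht : StrictMono t) (hαN : ∀ i, α i ≤ N)
    (hαinj : Function.Injective α)
    (hsmem : ∀ i j, s i j ∈ openPiece N t (α i)) (hsmono : ∀ i, StrictMono (s i))
    {i : Fin k} {j : Fin (p + 1)} {x : ℝ} (hx : x ∈ subPiece N t α s i j) :
    x ∉ Set.range t ∪ ⋃ i', Set.range (s i') := by
  rw [mem_subPiece_iff ht hαN hsmem hsmono] at hx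
  obtain ⟨hop, hlo, hhi⟩ := hx
  rintro (⟨m, rfl⟩ | hmem)
  · rcases lt_or_ge (m : ℕ) (α i) with h | h
    · have := ((mem_openPiece_iff ht (hαN i)).1 hop).1 m h; linarith
    · have := ((mem_openPiece_iff ht (hαN i)).1 hop).2 m h; linarith
  · simp only [Set.mem_iUnion, Set.mem_range] at hmem
    obtain ⟨i', j', rfl⟩ := hmem
    by_cases hii : i' = i
    · subst hii
      rcases lt_or_ge (j' : ℕ) (j : ℕ) with h | h
      · have := hlo j' h; linarith
      · have := hhi j' h; linarith
    · exact hii (hαinj (openPiece_eq_of_mem ht (hαN i') (hαN i) (hsmem i' j') hop))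

lemma subPiece_eq_of_mem (ht : StrictMono t) (hαN : ∀ i, α i ≤ N)
    (hαinj : Function.Injective α)
    (hsmem : ∀ i j, s i j ∈ openPiece N t (α i)) (hsmono : ∀ i, StrictMono (s i))
    {i i' : Fin k} {j j' : Fin (p + 1)} {x : ℝ}
    (h1 : x ∈ subPiece N t α s i j) (h2 : x ∈ subPiece N t α s i' j') :
    i = i' ∧ j = j' := by
  rw [mem_subPiece_iff ht hαN hsmem hsmono] at h1 h2
  have hii : i = i' := hαinj (openPiece_eq_of_mem ht (hαN i) (hαN i') h1.1 h2.1)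
  subst hii
  refine ⟨rfl, ?_⟩
  by_contra hjj
  have hne : (j : ℕ) ≠ (j' : ℕ) := fun h => hjj (Fin.ext h)
  rcases lt_or_gt_of_ne hne with h | h
  · have ha := h1.2.2 ⟨(j : ℕ), by have := j'.isLt; omega⟩ (by simp)
    have hb := h2.2.1 ⟨(j : ℕ), by have := j'.isLt; omega⟩ (by simpa using h)
    linarith
  · have ha := h2.2.2 ⟨(j' : ℕ), by have := j.isLt; omega⟩ (by simp)
    have hb := h1.2.1 ⟨(j' : ℕ), by have := j.isLt; omega⟩ (by simpa using h)
    linarith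

/-- The relation of lying in a common piece of the partition determined by `T`. -/
def Rel (T : Set ℝ) (a b : ℝ) : Prop :=
  a = b ∨ (a ∉ T ∧ b ∉ T ∧ ∀ u ∈ T, u ∉ Set.Icc (min a b) (max a b))

lemma Rel.symm' {T : Set ℝ} {a b : ℝ} (h : Rel T a b) : Rel T b a := by
  rcases h with h | ⟨h1, h2, h3⟩
  · exact Or.inl h.symm
  · exact Or.inr ⟨h2, h1, by rwa [min_comm b a, max_comm b a]⟩

lemma mem_pcAlgOn_iff_s8 {T : Set ℝ} {h : ℝ → ℂ} :
    h ∈ pcAlgOn T ↔ ∀ x y : ℝ, x ∉ T → y ∉ T →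
      (∀ u ∈ T, u ∉ Set.Icc (min x y) (max x y)) → h x = h y := Iff.rfl

lemma agree_of_rel {T : Set ℝ} {a b : ℝ} (hr : Rel T a b) {h : ℝ → ℂ}
    (hh : h ∈ pcAlgOn T) : h a = h b := by
  rcases hr with rfl | ⟨h1, h2, h3⟩
  · rfl
  · exact (mem_pcAlgOn_iff_s8.1 hh) a b h1 h2 h3

lemma indSingleton_mem {T : Set ℝ} {u : ℝ} (hu : u ∈ T) :
    (fun x => if x = u then (1 : ℂ) else 0) ∈ pcAlgOn T := by
  rw [mem_pcAlgOn_iff_s8]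
  intro x y hx hy _
  have hxu : x ≠ u := fun h => hx (h ▸ hu)
  have hyu : y ≠ u := fun h => hy (h ▸ hu)
  simp [hxu, hyu]

lemma indIic_mem {T : Set ℝ} {u : ℝ} (hu : u ∈ T) :
    (fun x => if x ≤ u then (1 : ℂ) else 0) ∈ pcAlgOn T := by
  rw [mem_pcAlgOn_iff_s8]
  intro x y hx hy hsep
  have h' : u < min x y ∨ max x y < u := by
    by_contra hcon
    push_neg at hcon
    exact hsep u hu ⟨hcon.1, hcon.2⟩
  rcases h' with h' | h'
  · have hx' : ¬x ≤ u := not_le.2 (lt_of_lt_of_le h' (min_le_left x y))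
    have hy' : ¬y ≤ u := not_le.2 (lt_of_lt_of_le h' (min_le_right x y))
    simp [hx', hy']
  · have hx' : x ≤ u := le_of_lt (lt_of_le_of_lt (le_max_left x y) h')
    have hy' : y ≤ u := le_of_lt (lt_of_le_of_lt (le_max_right x y) h')
    simp [hx', hy']

lemma rel_of_agree {T : Set ℝ} {a b : ℝ}
    (H : ∀ h ∈ pcAlgOn T, h a = h b) : Rel T a b := by
  by_cases ha : a ∈ T
  · left
    have h1 := H _ (indSingleton_mem ha)
    simp only [if_pos rfl] at h1
    by_contra hne
    rw [if_neg (Ne.symm hne)] at h1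
    exact one_ne_zero h1
  · by_cases hb : b ∈ T
    · left
      have h1 := H _ (indSingleton_mem hb)
      by_contra hne
      rw [if_neg hne, if_pos rfl] at h1
      exact zero_ne_one h1
    · right
      refine ⟨ha, hb, ?_⟩
      intro u hu hmem
      obtain ⟨hmin, hmax⟩ := hmem
      have h1 := H _ (indIic_mem hu)
      have hne_a : a ≠ u := fun h => ha (h ▸ hu)
      have hne_b : b ≠ u := fun h => hb (h ▸ hu)
      rcases le_total a b with hab | hab
      · rw [min_eq_left hab] at hmin
        rw [max_eq_right hab] at hmax
        rw [if_pos hmin] at h1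
        by_cases hbu : b ≤ u
        · exact hne_b (le_antisymm hbu hmax)
        · rw [if_neg hbu] at h1; exact one_ne_zero h1
      · rw [min_eq_right hab] at hmin
        rw [max_eq_left hab] at hmax
        by_cases hau : a ≤ u
        · exact hne_a (le_antisymm hau hmax)
        · rw [if_neg hau, if_pos hmin] at h1; exact zero_ne_one h1

lemma rel_map {T : Set ℝ} {f : ℝ → ℝ} (hf : AlgInvariant (pcAlgOn T) f)
    {a b : ℝ} (hr : Rel T a b) : Rel T (f a) (f b) := by
  apply rel_of_agree
  intro h hh
  exact agree_of_rel hr (hf h hh)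

lemma rel_pow {T : Set ℝ} {σ : Equiv.Perm ℝ} (hσ : AlgInvariant (pcAlgOn T) σ)
    (n : ℕ) {a b : ℝ} (hr : Rel T a b) : Rel T ((σ ^ n) a) ((σ ^ n) b) := by
  induction n with
  | zero => simpa using hr
  | succ n ih => simpa [pow_succ', Equiv.Perm.mul_apply] using rel_map hσ ih

lemma symm_pow_apply (σ : Equiv.Perm ℝ) (n : ℕ) (a : ℝ) :
    (σ.symm ^ n) ((σ ^ n) a) = a := by
  have h : σ.symm ^ n = (σ ^ n)⁻¹ := by rw [← Equiv.Perm.inv_def, inv_pow]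
  rw [h]
  exact Equiv.symm_apply_apply _ _

lemma pow_symm_pow_apply (σ : Equiv.Perm ℝ) (n : ℕ) (a : ℝ) :
    (σ ^ n) ((σ.symm ^ n) a) = a := by
  have := symm_pow_apply σ.symm n a
  rwa [Equiv.symm_symm] at this

lemma eq_of_rel_of_mem {T : Set ℝ} {a b : ℝ} (hr : Rel T a b) (ha : a ∈ T) : a = b := by
  rcases hr with h | ⟨h1, _, _⟩
  · exact h
  · exact absurd ha h1

lemma rel_of_mem_subPiece (ht : StrictMono t) (hαN : ∀ i, α i ≤ N)
    (hαinj : Function.Injective α)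
    (hsmem : ∀ i j, s i j ∈ openPiece N t (α i)) (hsmono : ∀ i, StrictMono (s i))
    {i : Fin k} {j : Fin (p + 1)} {a b : ℝ}
    (ha : a ∈ subPiece N t α s i j) (hb : b ∈ subPiece N t α s i j) :
    Rel (Set.range t ∪ ⋃ i', Set.range (s i')) a b := by
  by_cases hab : a = b
  · exact Or.inl hab
  right
  refine ⟨not_mem_T_of_mem_subPiece ht hαN hαinj hsmem hsmono ha,
    not_mem_T_of_mem_subPiece ht hαN hαinj hsmem hsmono hb, ?_⟩
  intro u hu hmem
  obtain ⟨hm1, hm2⟩ := hmem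
  have hu' : u ∈ subPiece N t α s i j := by
    rw [mem_subPiece_iff ht hαN hsmem hsmono] at ha hb ⊢
    refine ⟨(mem_openPiece_iff ht (hαN i)).2 ⟨?_, ?_⟩, ?_, ?_⟩
    · intro m hm
      have h1a := ((mem_openPiece_iff ht (hαN i)).1 ha.1).1 m hm
      have h1b := ((mem_openPiece_iff ht (hαN i)).1 hb.1).1 m hm
      have : t m < min a b := lt_min h1a h1b
      linarith
    · intro m hm
      have h1a := ((mem_openPiece_iff ht (hαN i)).1 ha.1).2 m hm
      have h1b := ((mem_openPiece_iff ht (hαN i)).1 hb.1).2 m hm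
      have : max a b < t m := max_lt h1a h1b
      linarith
    · intro j' hj'
      have h1a := ha.2.1 j' hj'
      have h1b := hb.2.1 j' hj'
      have : s i j' < min a b := lt_min h1a h1b
      linarith
    · intro j' hj'
      have h1a := ha.2.2 j' hj'
      have h1b := hb.2.2 j' hj'
      have : max a b < s i j' := max_lt h1a h1b
      linarith
  exact not_mem_T_of_mem_subPiece ht hαN hαinj hsmem hsmono hu' hu

lemma mem_subPiece_of_rel (ht : StrictMono t) (hαN : ∀ i, α i ≤ N)
    (hsmem : ∀ i j, s i j ∈ openPiece N t (α i)) (hsmono : ∀ i, StrictMono (s i))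
    {i : Fin k} {j : Fin (p + 1)} {a b : ℝ}
    (hr : Rel (Set.range t ∪ ⋃ i', Set.range (s i')) a b)
    (ha : a ∈ subPiece N t α s i j) : b ∈ subPiece N t α s i j := by
  rcases hr with rfl | ⟨haT, hbT, hsep⟩
  · exact ha
  have key : ∀ u, u ∈ (Set.range t ∪ ⋃ i', Set.range (s i')) →
      (u < a → u < b) ∧ (a < u → b < u) := by
    intro u hu
    have h' : u < min a b ∨ max a b < u := by
      by_contra hcon
      push_neg at hcon
      exact hsep u hu ⟨hcon.1, hcon.2⟩
    constructor
    · intro h1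
      rcases h' with h' | h'
      · exact lt_of_lt_of_le h' (min_le_right a b)
      · exact absurd h1 (not_lt.2 (le_trans (le_max_left a b) h'.le))
    · intro h1
      rcases h' with h' | h'
      · exact absurd h1 (not_lt.2 (le_trans h'.le (min_le_left a b)))
      · exact lt_of_le_of_lt (le_max_right a b) h'
  rw [mem_subPiece_iff ht hαN hsmem hsmono] at ha ⊢
  obtain ⟨hop, hlo, hhi⟩ := ha
  refine ⟨(mem_openPiece_iff ht (hαN i)).2 ⟨?_, ?_⟩, ?_, ?_⟩
  · intro m hm
    exact (key (t m) (Or.inl ⟨m, rfl⟩)).1 (((mem_openPiece_iff ht (hαN i)).1 hop).1 m hm)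
  · intro m hm
    exact (key (t m) (Or.inl ⟨m, rfl⟩)).2 (((mem_openPiece_iff ht (hαN i)).1 hop).2 m hm)
  · intro j' hj'
    exact (key (s i j') (Or.inr (Set.mem_iUnion.2 ⟨i, ⟨j', rfl⟩⟩))).1 (hlo j' hj')
  · intro j' hj'
    exact (key (s i j') (Or.inr (Set.mem_iUnion.2 ⟨i, ⟨j', rfl⟩⟩))).2 (hhi j' hj')

lemma exists_subPiece_mem (ht : StrictMono t) (hαN : ∀ i, α i ≤ N)
    (hsmem : ∀ i j, s i j ∈ openPiece N t (α i)) (hsmono : ∀ i, StrictMono (s i))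
    {i : Fin k} {x : ℝ} (hx : x ∈ openPiece N t (α i))
    (hxs : ∀ j' : Fin p, x ≠ s i j') : ∃ j : Fin (p + 1), x ∈ subPiece N t α s i j := by
  by_cases hA : (Finset.univ.filter (fun j' : Fin p => s i j' < x)).Nonempty
  · set jm := (Finset.univ.filter (fun j' : Fin p => s i j' < x)).max' hA with hjm
    refine ⟨⟨(jm : ℕ) + 1, by have := jm.isLt; omega⟩, ?_⟩
    rw [mem_subPiece_iff ht hαN hsmem hsmono]
    refine ⟨hx, ?_, ?_⟩
    · intro j' hj'
      have hj'le : j' ≤ jm := by rw [Fin.le_def]; exact Nat.lt_succ_iff.1 hj'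
      have hjm_mem := Finset.max'_mem _ hA
      rw [Finset.mem_filter] at hjm_mem
      exact lt_of_le_of_lt ((hsmono i).monotone hj'le) hjm_mem.2
    · intro j' hj'
      have hj'notmem : j' ∉ Finset.univ.filter (fun j'' : Fin p => s i j'' < x) := by
        intro hmem
        have h2 := Finset.le_max' _ _ hmem
        rw [Fin.le_def] at h2
        have h3 : (jm : ℕ) + 1 ≤ (j' : ℕ) := hj'
        omega
      have h1 : ¬s i j' < x := by
        intro h
        exact hj'notmem (Finset.mem_filter.2 ⟨Finset.mem_univ _, h⟩)
      exact lt_of_le_of_ne (not_lt.1 h1) (hxs j')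
  · refine ⟨⟨0, by omega⟩, ?_⟩
    rw [mem_subPiece_iff ht hαN hsmem hsmono]
    refine ⟨hx, ?_, ?_⟩
    · intro j' hj'
      simp at hj'
    · intro j' _
      have h1 : ¬s i j' < x := fun h =>
        hA ⟨j', Finset.mem_filter.2 ⟨Finset.mem_univ _, h⟩⟩
      exact lt_of_le_of_ne (not_lt.1 h1) (hxs j')

lemma exists_ne_of_mem_subPiece {i : Fin k} {j : Fin (p + 1)} {y : ℝ}
    (hy : y ∈ subPiece N t α s i j) :
    ∃ u, u ∈ subPiece N t α s i j ∧ u ≠ y := by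
  obtain ⟨h1, h2⟩ := hy
  obtain ⟨u, hu1, hu2⟩ := EReal.exists_between_coe_real h1
  exact ⟨u, ⟨hu1, lt_trans hu2 h2⟩, ne_of_lt (EReal.coe_lt_coe_iff.1 hu2)⟩

lemma orbit_mem {σ : Equiv.Perm ℝ}
    (hcyc : ∀ i : Fin k, ∃ i' : Fin k, ((i' : ℕ) = ((i : ℕ) + 1) % k) ∧
      σ '' openPiece N t (α i) = openPiece N t (α i'))
    (n : ℕ) (i : Fin k) (y : ℝ) (hy : y ∈ openPiece N t (α i)) :
    ∃ i' : Fin k, ((i' : ℕ) = ((i : ℕ) + n) % k) ∧ (σ ^ n) y ∈ openPiece N t (α i') := by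
  induction n with
  | zero => exact ⟨i, by simp [Nat.mod_eq_of_lt i.isLt], by simpa using hy⟩
  | succ n ih =>
      obtain ⟨i1, hi1, hmem⟩ := ih
      obtain ⟨i2, hi2, himg⟩ := hcyc i1
      refine ⟨i2, ?_, ?_⟩
      · rw [hi2, hi1, Nat.mod_add_mod, Nat.add_assoc]
      · have happ : ((σ : Equiv.Perm ℝ) ^ (n + 1)) y = σ ((σ ^ n) y) := by
          rw [pow_succ']; rfl
        rw [happ, ← himg]
        exact Set.mem_image_of_mem _ hmem

lemma mod_eq_self_imp {k0 : ℕ} (hk : 0 < k0) {i0 n : ℕ} (hik : i0 < k0)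
    (h : (i0 + n) % k0 = i0) : n % k0 = 0 := by
  rw [Nat.add_mod, Nat.mod_eq_of_lt hik] at h
  have hr : n % k0 < k0 := Nat.mod_lt _ hk
  rcases Nat.lt_or_ge (i0 + n % k0) k0 with hc | hc
  · rw [Nat.mod_eq_of_lt hc] at h; omega
  · have h2 : (i0 + n % k0) % k0 = i0 + n % k0 - k0 := by
      rw [Nat.mod_eq_sub_mod hc, Nat.mod_eq_of_lt (by omega)]
    omega

end Aux

/-- in the cyclic setup, every point `x` of an interval `I_{α i} ⊆ C_k` lies in
a piece of the refined partition which is contained in `C̃_{k·l}` for some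
`l ∈ {1, …, p+1}`; in particular `x ∈ C̃_{k·l}`. -/
theorem statement8 (N : ℕ) (t : Fin N → ℝ) (ht : StrictMono t)
    (σ : Equiv.Perm ℝ) (k p : ℕ) (α : Fin k → ℕ) (s : Fin k → Fin p → ℝ)
    (hsetup : CyclicSetup N t σ α s) (i : Fin k) (x : ℝ)
    (hx : x ∈ openPiece N t (α i)) :
    ∃ l : ℕ, 1 ≤ l ∧ l ≤ p + 1 ∧
      ∃ P ∈ cyclePieces N t α s, x ∈ P ∧ P ⊆ Ctil N t σ α s (k * l) := by
  obtain ⟨hk, hαN, hαinj, hsmem, hsmono, hcyc, -, -, -, hS1, hS2⟩ := hsetup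
  -- convenient abbreviations for the jump set
  have hTs : ∀ (i' : Fin k) (j' : Fin p),
      s i' j' ∈ Set.range t ∪ ⋃ i'', Set.range (s i'') :=
    fun i' j' => Or.inr (Set.mem_iUnion.2 ⟨i', ⟨j', rfl⟩⟩)
  -- points of `I_{α i}` stay in `I_{α i}` under `σ^(k·m)`
  have horbi : ∀ (n : ℕ) (y : ℝ), y ∈ openPiece N t (α i) → k ∣ n →
      (σ ^ n) y ∈ openPiece N t (α i) := by
    intro n y hy hdvd
    obtain ⟨i', hi', hmem⟩ := orbit_mem hcyc n i y hy
    have hii : i' = i := by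
      apply Fin.ext
      rw [hi']
      obtain ⟨m, rfl⟩ := hdvd
      rw [Nat.add_mul_mod_self_left, Nat.mod_eq_of_lt i.isLt]
    rwa [hii] at hmem
  -- a return to `I_{α i}` forces `k ∣ n`
  have hdvd_of_ret : ∀ (n : ℕ) (y : ℝ), y ∈ openPiece N t (α i) →
      (σ ^ n) y ∈ openPiece N t (α i) → k ∣ n := by
    intro n y hy hret
    obtain ⟨i', hi', hmem⟩ := orbit_mem hcyc n i y hy
    have hii : i' = i := hαinj (openPiece_eq_of_mem ht (hαN i') (hαN i) hmem hret)
    have h1 : ((i : ℕ) + n) % k = (i : ℕ) := by rw [← hi', hii]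
    exact Nat.dvd_of_mod_eq_zero (mod_eq_self_imp hk i.isLt h1)
  have hsplit : ∀ (m : ℕ) (y : ℝ), (σ ^ (k * (m + 1))) y = (σ ^ k) ((σ ^ (k * m)) y) := by
    intro m y
    have h1 : k * (m + 1) = k + k * m := by ring
    rw [h1, pow_add]
    rfl
  have hunsplit : ∀ (m : ℕ) (y : ℝ),
      (σ.symm ^ k) ((σ ^ (k * (m + 1))) y) = (σ ^ (k * m)) y := by
    intro m y
    rw [hsplit]
    exact symm_pow_apply σ k _
  have hrelpow : ∀ (n : ℕ) {a b : ℝ},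
      Rel (Set.range t ∪ ⋃ i', Set.range (s i')) a b →
      Rel (Set.range t ∪ ⋃ i', Set.range (s i')) ((σ ^ n) a) ((σ ^ n) b) :=
    fun n _ _ h => rel_pow hS1 n h
  have hrelpow' : ∀ (n : ℕ) {a b : ℝ},
      Rel (Set.range t ∪ ⋃ i', Set.range (s i')) a b →
      Rel (Set.range t ∪ ⋃ i', Set.range (s i')) ((σ.symm ^ n) a) ((σ.symm ^ n) b) :=
    fun n _ _ h => rel_pow hS2 n h
  by_cases hxs : ∃ j0 : Fin p, x = s i j0
  · -- CASE B : `x` is one of the added jump points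
    obtain ⟨j0, hxj0⟩ := hxs
    have hp : 0 < p := lt_of_le_of_lt (Nat.zero_le _) j0.isLt
    have hsing : ∀ m : ℕ, ∃ j : Fin p, (σ ^ (k * m)) x = s i j := by
      intro m
      induction m with
      | zero => exact ⟨j0, by simpa using hxj0⟩
      | succ m ih =>
          obtain ⟨jm, hjm⟩ := ih
          by_contra hcon
          push_neg at hcon
          have hz : (σ ^ (k * (m + 1))) x ∈ openPiece N t (α i) :=
            horbi _ x hx ⟨m + 1, rfl⟩
          obtain ⟨jz, hjz⟩ := exists_subPiece_mem ht hαN hsmem hsmono hz hcon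
          obtain ⟨u, hu, hune⟩ := exists_ne_of_mem_subPiece hjz
          have hrel := rel_of_mem_subPiece ht hαN hαinj hsmem hsmono hu hjz
          have hrel2 := hrelpow' k hrel
          rw [hunsplit m x] at hrel2
          have hmemT : (σ ^ (k * m)) x ∈ Set.range t ∪ ⋃ i', Set.range (s i') := by
            rw [hjm]; exact hTs i jm
          have heq1 := eq_of_rel_of_mem hrel2.symm' hmemT
          apply hune
          calc u = (σ ^ k) ((σ.symm ^ k) u) := (pow_symm_pow_apply σ k u).symm
            _ = (σ ^ k) ((σ ^ (k * m)) x) := by rw [← heq1]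
            _ = (σ ^ (k * (m + 1))) x := (hsplit m x).symm
    choose J hJ using hsing
    have hper : ∀ a b : ℕ, a < b → J a = J b → (σ ^ (k * (b - a))) x = x := by
      intro a b hlt he
      have h1 : (σ ^ (k * a)) x = (σ ^ (k * b)) x := by rw [hJ a, hJ b, he]
      have h2 : (σ ^ (k * b)) x = (σ ^ (k * a)) ((σ ^ (k * (b - a))) x) := by
        rw [← Equiv.Perm.mul_apply, ← pow_add]
        congr 2
        rw [← Nat.mul_add]
        congr 1
        omega
      have h3 := (σ ^ (k * a)).injective (h1.trans h2)
      exact h3.symm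
    obtain ⟨a, b, hab, heqab⟩ :=
      Fintype.exists_ne_map_eq_of_card_lt (fun m : Fin (p + 1) => J (m : ℕ)) (by simp)
    have hLex : ∃ d : ℕ, 0 < d ∧ (σ ^ (k * d)) x = x ∧ d ≤ p := by
      rcases hab.lt_or_gt with hlt | hlt
      · exact ⟨(b : ℕ) - (a : ℕ), by have : (a : ℕ) < (b : ℕ) := hlt; omega,
          hper _ _ hlt heqab, by have := b.isLt; omega⟩
      · exact ⟨(a : ℕ) - (b : ℕ), by have : (b : ℕ) < (a : ℕ) := hlt; omega,
          hper _ _ hlt heqab.symm, by have := a.isLt; omega⟩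
    obtain ⟨d, hd0, hdret, hdp⟩ := hLex
    have hLne : ∃ l : ℕ, 0 < l ∧ (σ ^ (k * l)) x = x := ⟨d, hd0, hdret⟩
    obtain ⟨l, ⟨hl1, hlret⟩, hlmin⟩ :
        ∃ l : ℕ, (0 < l ∧ (σ ^ (k * l)) x = x) ∧
          ∀ m, (0 < m ∧ (σ ^ (k * m)) x = x) → l ≤ m :=
      ⟨Nat.find hLne, Nat.find_spec hLne, fun m hm => Nat.find_min' hLne hm⟩
    have hld : l ≤ d := hlmin d ⟨hd0, hdret⟩
    refine ⟨l, hl1, by omega, {s i j0}, Or.inr ⟨i, j0, rfl⟩,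
      Set.mem_singleton_iff.2 hxj0, ?_⟩
    intro y hy
    rw [Set.mem_singleton_iff] at hy
    have hyx : y = x := by rw [hy, ← hxj0]
    rw [hyx]
    refine ⟨Set.mem_iUnion.2 ⟨i, hx⟩, ⟨Nat.mul_pos hk hl1, {s i j0},
      Or.inr ⟨i, j0, rfl⟩, Set.mem_singleton_iff.2 hxj0, ?_⟩, ?_⟩
    · rw [Set.mem_singleton_iff, hlret]; exact hxj0
    · intro n hn
      obtain ⟨hn0, P', hP', hxP', hσP'⟩ := hn
      rcases hP' with ⟨i'', j'', rfl⟩ | ⟨i'', j'', rfl⟩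
      · exfalso
        have hxT : x ∈ Set.range t ∪ ⋃ i', Set.range (s i') := by
          rw [hxj0]; exact hTs i j0
        exact not_mem_T_of_mem_subPiece ht hαN hαinj hsmem hsmono hxP' hxT
      · rw [Set.mem_singleton_iff] at hxP' hσP'
        have hσx : (σ ^ n) x = x := by rw [hσP', ← hxP']
        obtain ⟨m, rfl⟩ := hdvd_of_ret n x hx (by rw [hσx]; exact hx)
        have hm0 : 0 < m := Nat.pos_of_ne_zero (fun h => by simp [h] at hn0)
        have hlem : l ≤ m := hlmin m ⟨hm0, hσx⟩
        exact Nat.mul_le_mul_left k hlem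
  · -- CASE A : `x` lies in one of the open subintervals
    push_neg at hxs
    have hsub : ∀ m : ℕ, ∃ j : Fin (p + 1), (σ ^ (k * m)) x ∈ subPiece N t α s i j := by
      intro m
      induction m with
      | zero =>
          obtain ⟨j, hj⟩ := exists_subPiece_mem ht hαN hsmem hsmono hx hxs
          exact ⟨j, by simpa using hj⟩
      | succ m ih =>
          obtain ⟨jm, hjm⟩ := ih
          have hz : (σ ^ (k * (m + 1))) x ∈ openPiece N t (α i) :=
            horbi _ x hx ⟨m + 1, rfl⟩
          have hzs : ∀ j' : Fin p, (σ ^ (k * (m + 1))) x ≠ s i j' := by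
            intro j' hcon
            obtain ⟨u, hu, hune⟩ := exists_ne_of_mem_subPiece hjm
            have hrel := rel_of_mem_subPiece ht hαN hαinj hsmem hsmono hu hjm
            have hrel2 := hrelpow k hrel
            rw [← hsplit m x] at hrel2
            have hmemT : (σ ^ (k * (m + 1))) x ∈ Set.range t ∪ ⋃ i', Set.range (s i') := by
              rw [hcon]; exact hTs i j'
            have heq1 := eq_of_rel_of_mem hrel2.symm' hmemT
            rw [hsplit m x] at heq1
            exact hune ((σ ^ k).injective heq1).symm
          exact exists_subPiece_mem ht hαN hsmem hsmono hz hzs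
    choose J hJ using hsub
    have hback : ∀ a b : ℕ, J (a + 1) = J (b + 1) → J a = J b := by
      intro a b he
      have h1 : (σ ^ (k * (a + 1))) x ∈ subPiece N t α s i (J (a + 1)) := hJ (a + 1)
      have h2 : (σ ^ (k * (b + 1))) x ∈ subPiece N t α s i (J (a + 1)) := by
        rw [he]; exact hJ (b + 1)
      have hrel := rel_of_mem_subPiece ht hαN hαinj hsmem hsmono h1 h2
      have hrel2 := hrelpow' k hrel
      rw [hunsplit a x, hunsplit b x] at hrel2
      have h3 : (σ ^ (k * b)) x ∈ subPiece N t α s i (J a) :=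
        mem_subPiece_of_rel ht hαN hsmem hsmono hrel2 (hJ a)
      exact ((subPiece_eq_of_mem ht hαN hαinj hsmem hsmono (hJ b) h3).2).symm
    have hshift : ∀ c a b : ℕ, J (a + c) = J (b + c) → J a = J b := by
      intro c
      induction c with
      | zero => intro a b h; simpa using h
      | succ c ih => intro a b h; exact ih a b (hback (a + c) (b + c) h)
    have hper : ∀ a b : ℕ, a < b → J a = J b → J (b - a) = J 0 := by
      intro a b hlt he
      apply hshift a
      rw [Nat.sub_add_cancel hlt.le, Nat.zero_add]
      exact he.symm
    obtain ⟨a, b, hab, heqab⟩ :=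
      Fintype.exists_ne_map_eq_of_card_lt (fun m : Fin (p + 2) => J (m : ℕ)) (by simp)
    have hLex : ∃ d : ℕ, 0 < d ∧ J d = J 0 ∧ d ≤ p + 1 := by
      rcases hab.lt_or_gt with hlt | hlt
      · exact ⟨(b : ℕ) - (a : ℕ), by have : (a : ℕ) < (b : ℕ) := hlt; omega,
          hper _ _ hlt heqab, by have := b.isLt; omega⟩
      · exact ⟨(a : ℕ) - (b : ℕ), by have : (b : ℕ) < (a : ℕ) := hlt; omega,
          hper _ _ hlt heqab.symm, by have := a.isLt; omega⟩
    obtain ⟨d, hd0, hdret, hdp⟩ := hLex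
    have hLne : ∃ l : ℕ, 0 < l ∧ J l = J 0 := ⟨d, hd0, hdret⟩
    obtain ⟨l, ⟨hl1, hlret⟩, hlmin⟩ :
        ∃ l : ℕ, (0 < l ∧ J l = J 0) ∧ ∀ m, (0 < m ∧ J m = J 0) → l ≤ m :=
      ⟨Nat.find hLne, Nat.find_spec hLne, fun m hm => Nat.find_min' hLne hm⟩
    have hld : l ≤ d := hlmin d ⟨hd0, hdret⟩
    have hxJ0 : x ∈ subPiece N t α s i (J 0) := by
      have := hJ 0
      simpa using this
    refine ⟨l, hl1, by omega, subPiece N t α s i (J 0),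
      Or.inl ⟨i, J 0, rfl⟩, hxJ0, ?_⟩
    intro y hy
    have hrelxy := rel_of_mem_subPiece ht hαN hαinj hsmem hsmono hxJ0 hy
    refine ⟨Set.mem_iUnion.2 ⟨i, subPiece_subset ht hαN hsmem hsmono hy⟩,
      ⟨Nat.mul_pos hk hl1, subPiece N t α s i (J 0), Or.inl ⟨i, J 0, rfl⟩, hy, ?_⟩, ?_⟩
    · have h1 : (σ ^ (k * l)) x ∈ subPiece N t α s i (J 0) := by
        have h0 := hJ l
        rwa [hlret] at h0
      exact mem_subPiece_of_rel ht hαN hsmem hsmono (hrelpow _ hrelxy) h1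
    · intro n hn
      obtain ⟨hn0, P', hP', hyP', hσP'⟩ := hn
      rcases hP' with ⟨i'', j'', rfl⟩ | ⟨i'', j'', rfl⟩
      · obtain ⟨hii, hjj⟩ := subPiece_eq_of_mem ht hαN hαinj hsmem hsmono hy hyP'
        subst hii
        have hjj' : j'' = J 0 := hjj.symm
        subst hjj'
        have hyop : y ∈ openPiece N t (α i) := subPiece_subset ht hαN hsmem hsmono hy
        have hσop : (σ ^ n) y ∈ openPiece N t (α i) :=
          subPiece_subset ht hαN hsmem hsmono hσP'
        obtain ⟨m, rfl⟩ := hdvd_of_ret n y hyop hσop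
        have hm0 : 0 < m := Nat.pos_of_ne_zero (fun h => by simp [h] at hn0)
        have h1 : (σ ^ (k * m)) y ∈ subPiece N t α s i (J m) :=
          mem_subPiece_of_rel ht hαN hsmem hsmono (hrelpow _ hrelxy) (hJ m)
        have h2 := (subPiece_eq_of_mem ht hαN hαinj hsmem hsmono h1 hσP').2
        have hlem : l ≤ m := hlmin m ⟨hm0, h2⟩
        exact Nat.mul_le_mul_left k hlem
      · exfalso
        have hyT : y ∉ Set.range t ∪ ⋃ i', Set.range (s i') :=
          not_mem_T_of_mem_subPiece ht hαN hαinj hsmem hsmono hy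
        rw [Set.mem_singleton_iff] at hyP'
        exact hyT (by rw [hyP']; exact hTs i'' j'')

end PaperTRS
end
end
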